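/- Suppose there exist constants K > 0 and M > 0 such that for all u ≥ 0, N(2·max(u^{1/2}, u^{1/α̃}), T, ‖·‖) ≤ exp(Ku), where 1 < α̃ < 2 and α = α̃/(α̃-1) > 2. Then for all δ > 0: if δ ≥ 2M then (1/K) log N(δ, T, ‖·‖) ≤ (2M/δ)², and if 0 < δ ≤ 2M then (1/K) log N(δ, T, ‖·‖) ≤ (2M/δ)^α. (Here the hypothesis is applied to all rescalings sT with sM playing the role of u.) -/

import Mathlib

open Pointwise

/-- The `δ`-covering number of `T ⊆ ℝⁿ`: minimal number of closed balls of radius `δ`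
(with arbitrary centers) needed to cover `T`. -/
noncomputable def coverNum (n : ℕ) (δ : ℝ) (T : Set (EuclideanSpace ℝ (Fin n))) : ℕ :=
  sInf {N : ℕ | ∃ C : Finset (EuclideanSpace ℝ (Fin n)), C.card = N ∧
    T ⊆ ⋃ c ∈ C, Metric.closedBall c δ}

/-!
Covering numbers are invariant under simultaneous rescaling of the set and the radius,
`N(sδ, sT) = N(δ, T)`, so the hypothesis at scale `s` bounds `N(δ, T)` for
`δ = 2 max(u^{1/2}, u^{1/α̃}) / s` with `u = sM`. Solving for `u` gives `u = (2M/δ)²` when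
`δ ≥ 2M` (then `u ≤ 1` and the square root dominates) and `u = (2M/δ)^α` when `δ ≤ 2M`
(then `u ≥ 1`, the `1/α̃`-power dominates, and `1/α̃ - 1 = -1/α`).
-/

lemma subset_iUnion_closedBall_smul {E : Type*} [NormedAddCommGroup E] [NormedSpace ℝ E]
    [DecidableEq E] {s δ : ℝ} (hs : 0 < s) {T : Set E} {C : Finset E}
    (h : T ⊆ ⋃ c ∈ C, Metric.closedBall c δ) :
    s • T ⊆ ⋃ c ∈ C.image (s • ·), Metric.closedBall c (s * δ) := by
  rintro _ ⟨x, hx, rfl⟩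
  obtain ⟨c, hc, hxc⟩ := Set.mem_iUnion₂.1 (h hx)
  refine Set.mem_iUnion₂.2 ⟨s • c, Finset.mem_image_of_mem _ hc, ?_⟩
  rw [Metric.mem_closedBall, dist_smul₀, Real.norm_eq_abs, abs_of_pos hs]
  exact mul_le_mul_of_nonneg_left hxc hs.le

lemma coverNum_smul (n : ℕ) {s : ℝ} (δ : ℝ) (hs : 0 < s) (T : Set (EuclideanSpace ℝ (Fin n))) :
    coverNum n (s * δ) (s • T) = coverNum n δ T := by
  unfold coverNum
  congr 1
  ext N
  constructor
  · rintro ⟨C, hcard, hcov⟩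
    refine ⟨C.image (s⁻¹ • ·), ?_, ?_⟩
    · rw [Finset.card_image_of_injective _ (smul_right_injective _ (by positivity)), hcard]
    · have := subset_iUnion_closedBall_smul (s := s⁻¹) (by positivity) hcov
      rwa [inv_smul_smul₀ hs.ne', inv_mul_cancel_left₀ hs.ne'] at this
  · rintro ⟨C, hcard, hcov⟩
    exact ⟨C.image (s • ·),
      by rw [Finset.card_image_of_injective _ (smul_right_injective _ hs.ne'), hcard],
      subset_iUnion_closedBall_smul hs hcov⟩

lemma log_natCast_le_of_le_exp {N : ℕ} {x : ℝ} (hx : 0 ≤ x) (h : (N : ℝ) ≤ Real.exp x) :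
    Real.log N ≤ x := by
  rcases N.eq_zero_or_pos with rfl | hN
  · simpa using hx
  · exact (Real.log_le_iff_le_exp (by exact_mod_cast hN)).2 h

lemma log_coverNum_le_of_forall_smul {n : ℕ} {K M : ℝ} (hK : 0 < K) (hM : 0 < M)
    {T : Set (EuclideanSpace ℝ (Fin n))} {r : ℝ → ℝ}
    (hcov : ∀ s : ℝ, 0 < s → (coverNum n (r (s * M)) (s • T) : ℝ) ≤ Real.exp (K * (s * M)))
    ⦃u δ : ℝ⦄ (hu : 0 < u) (hδ : M * r u = u * δ) :
    (1 / K) * Real.log (coverNum n δ T) ≤ u := by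
  have hsM : u / M * M = u := div_mul_cancel₀ u hM.ne'
  have hsδ : u / M * δ = r u := by
    rw [div_mul_eq_mul_div, div_eq_iff hM.ne', ← hδ, mul_comm]
  have hbound := hcov (u / M) (by positivity)
  rw [hsM, ← hsδ, coverNum_smul n δ (by positivity) T] at hbound
  rw [one_div, inv_mul_le_iff₀ hK]
  exact log_natCast_le_of_le_exp (by positivity) hbound

theorem stmt_8 (n : ℕ) (K M αt α : ℝ) (hK : 0 < K) (hM : 0 < M)
    (h1 : 1 < αt) (h2 : αt < 2) (hα : α = αt / (αt - 1))
    (T : Set (EuclideanSpace ℝ (Fin n)))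
    (hcov : ∀ s : ℝ, 0 < s →
      (coverNum n (2 * max ((s * M) ^ ((1 : ℝ) / 2)) ((s * M) ^ (1 / αt))) (s • T) : ℝ)
        ≤ Real.exp (K * (s * M))) :
    ∀ δ : ℝ, 0 < δ →
      (2 * M ≤ δ → (1 / K) * Real.log (coverNum n δ T) ≤ (2 * M / δ) ^ 2) ∧
      (δ ≤ 2 * M → (1 / K) * Real.log (coverNum n δ T) ≤ (2 * M / δ) ^ α) := by
  intro δ hδ
  have hx : 0 < 2 * M / δ := by positivity
  have hexp : (1 : ℝ) / 2 ≤ 1 / αt := one_div_le_one_div_of_le (by linarith) h2.le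
  have key := log_coverNum_le_of_forall_smul
    (r := fun u ↦ 2 * max (u ^ ((1 : ℝ) / 2)) (u ^ (1 / αt))) hK hM hcov
  constructor
  · intro hδM
    have hu1 : (2 * M / δ) ^ 2 ≤ 1 := pow_le_one₀ hx.le ((div_le_one hδ).2 hδM)
    have hsqrt : ((2 * M / δ) ^ 2) ^ ((1 : ℝ) / 2) = 2 * M / δ := by
      rw [← Real.sqrt_eq_rpow, Real.sqrt_sq hx.le]
    refine key (by positivity) ?_
    rw [max_eq_left (Real.rpow_le_rpow_of_exponent_ge (by positivity) hu1 hexp), hsqrt]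
    field_simp
  · intro hδM
    have hconj : α.HolderConjugate αt := ((Real.holderConjugate_iff_eq_conjExponent h1).2 hα).symm
    have hu1 : 1 ≤ (2 * M / δ) ^ α := Real.one_le_rpow ((one_le_div hδ).2 hδM) hconj.nonneg
    refine key (by positivity) ?_
    rw [max_eq_right (Real.rpow_le_rpow_of_exponent_le hu1 hexp), ← Real.rpow_mul hx.le,
      mul_one_div, hconj.div_conj_eq_sub_one, Real.rpow_sub_one hx.ne']
    field_simp
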